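/- arXiv:1004.1938 — 3 statements merged into one kernel-verified Lean document; each statement's English description precedes it below -/
import Mathlib

section
/- Let d, r be integers with 0 < r < d, set n = d + r, and let A = (x_1,…,x_n) ∈ Γ_n^d with x_1 ≤ x_2 ≤ … ≤ x_n. If i is such that x_i ≤ r, then per_i^+(A) = per(A) + per(A_{i^*, x_{i^*}+d}) − per(A_{i^*, x_{i^*}}). If i is such that x_i ≥ 2, then per_i^−(A) = per(A) + per(A_{i_*, x_{i_*}−1}) − per(A_{i_*, x_{i_*}+d−1}). -/
/-- The permanent of an `n × n` matrix: `per(A) = ∑_{σ ∈ S_n} ∏_i A i (σ i)`. -/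
def permanent {n : ℕ}  (A : Matrix (Fin n) (Fin n) ℕ) : ℕ :=
  ∑ σ : Equiv.Perm (Fin n), ∏ i, A i (σ i)

/-- The `(0,1)`-matrix determined by the configuration `x` (1-indexed starting columns):
entry `(i,j)` (with `j : Fin n` representing column `j+1`) is `1` iff
`x i ≤ j+1 ≤ x i + d - 1`. -/
def confMatrix (n d : ℕ) (x : Fin n → ℕ) : Matrix (Fin n) (Fin n) ℕ :=
  fun i j => if x i ≤ (j : ℕ) + 1 ∧ (j : ℕ) + 1 ≤ x i + d - 1 then 1 else 0

/-- A valid configuration for `Γ_n^d`: `1 ≤ x i ≤ n - d + 1` for all `i`. -/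
def ValidConf (n d : ℕ) (x : Fin n → ℕ) : Prop :=
  ∀ i, 1 ≤ x i ∧ x i ≤ n - d + 1

/-- Membership in `Γ_n^d`: the set of `n × n` `(0,1)`-matrices each of whose rows has
exactly `d` ones forming a contiguous block. -/
def IsGamma (n d : ℕ) (A : Matrix (Fin n) (Fin n) ℕ) : Prop :=
  ∃ x : Fin n → ℕ, ValidConf n d x ∧ A = confMatrix n d x

/-- `A_{i,j}`: the matrix obtained from `A` by deleting row `i` and column `j`. -/
def delMinor {n : ℕ} (A : Matrix (Fin (n + 1)) (Fin (n + 1)) ℕ) (i j : Fin (n + 1)) :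
    Matrix (Fin n) (Fin n) ℕ :=
  A.submatrix i.succAbove j.succAbove

/-- `i^* = max { k : x k = x i }`. -/
def istar {n : ℕ} (x : Fin n → ℕ) (i : Fin n) : Fin n :=
  (Finset.univ.filter fun k => x k = x i).max' ⟨i, by simp⟩

/-- `i_* = min { k : x k = x i }`. -/
def isubstar {n : ℕ} (x : Fin n → ℕ) (i : Fin n) : Fin n :=
  (Finset.univ.filter fun k => x k = x i).min' ⟨i, by simp⟩

/-!
Moving the block of row `k` one step to the right replaces the row `e_[x, x+d-1]` by
`e_[x+1, x+d]` (indicator vectors of column ranges), and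
`e_[x, x+d-1] + e_(x+d) = e_[x+1, x+d] + e_x`. The permanent is additive in each row, and a row
equal to the unit vector `e_c` contributes the permanent of the minor `A_{k,c}`; comparing the
expansions of both sides gives the identity. Moving the block to the left is the same identity
read backwards.
-/

open Equiv Finset

namespace Fin

variable {n : ℕ}

def extendPerm (i j : Fin (n + 1)) (τ : Perm (Fin n)) : Perm (Fin (n + 1)) :=
  (finSuccEquiv' i).trans ((optionCongr τ).trans (finSuccEquiv' j).symm)

@[simp]
theorem extendPerm_apply_self (i j : Fin (n + 1)) (τ : Perm (Fin n)) :
    extendPerm i j τ i = j := by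
  simp [extendPerm]

@[simp]
theorem extendPerm_apply_succAbove (i j : Fin (n + 1)) (τ : Perm (Fin n)) (a : Fin n) :
    extendPerm i j τ (i.succAbove a) = j.succAbove (τ a) := by
  simp [extendPerm]

theorem sum_perm_filter_apply_eq {M : Type*} [AddCommMonoid M] (i j : Fin (n + 1))
    (f : Perm (Fin (n + 1)) → M) :
    ∑ σ with σ i = j, f σ = ∑ τ : Perm (Fin n), f (extendPerm i j τ) := by
  let E : Perm (Fin (n + 1)) ≃ Option (Fin n) × Perm (Fin n) :=
    (equivCongr (finSuccEquiv' i) (finSuccEquiv' j)).trans Perm.decomposeOption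
  have hE_apply : ∀ p, E.symm p i = j ↔ p.1 = none := by
    rintro ⟨_ | a, τ⟩ <;> simp [E, Perm.decomposeOption]
  have hE_none : ∀ τ, E.symm (none, τ) = extendPerm i j τ := fun τ => by
    ext a
    simp [E, extendPerm, Perm.decomposeOption]
  rw [sum_filter, ← E.symm.sum_comp, Fintype.sum_prod_type, Fintype.sum_option]
  simp [hE_apply, hE_none]

end Fin

namespace Matrix

variable {R : Type*} [CommSemiring R]

theorem permanent_updateCol_add {ι : Type*} [DecidableEq ι] [Fintype ι] (M : Matrix ι ι R)
    (j : ι) (u v : ι → R) :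
    (M.updateCol j (u + v)).permanent =
      (M.updateCol j u).permanent + (M.updateCol j v).permanent := by
  simp only [permanent, ← sum_add_distrib, ← mul_prod_erase _ _ (mem_univ j), updateCol_self,
    Pi.add_apply, add_mul, prod_congr rfl fun k hk => updateCol_ne (ne_of_mem_erase hk)]

theorem permanent_updateRow_add {ι : Type*} [DecidableEq ι] [Fintype ι] (M : Matrix ι ι R)
    (i : ι) (u v : ι → R) :
    (M.updateRow i (u + v)).permanent =
      (M.updateRow i u).permanent + (M.updateRow i v).permanent := by
  rw [← permanent_transpose, ← updateCol_transpose, permanent_updateCol_add, updateCol_transpose,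
    updateCol_transpose, permanent_transpose, permanent_transpose]

theorem permanent_updateCol_single {n : ℕ} (M : Matrix (Fin (n + 1)) (Fin (n + 1)) R)
    (i j : Fin (n + 1)) :
    (M.updateCol j (Pi.single i 1)).permanent =
      (M.submatrix i.succAbove j.succAbove).permanent := by
  have h_prod : ∀ σ : Perm (Fin (n + 1)), ∏ k, M.updateCol j (Pi.single i 1) (σ k) k =
      if σ j = i then ∏ a, M (σ (j.succAbove a)) (j.succAbove a) else 0 := by
    intro σ
    rw [j.prod_univ_succAbove, updateCol_self]
    simp only [updateCol_ne (Fin.succAbove_ne j _)]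
    split_ifs with h <;> simp [h]
  simp only [permanent, h_prod, ← sum_filter, Fin.sum_perm_filter_apply_eq,
    Fin.extendPerm_apply_succAbove, submatrix_apply]

theorem permanent_updateRow_single {n : ℕ} (M : Matrix (Fin (n + 1)) (Fin (n + 1)) R)
    (i j : Fin (n + 1)) :
    (M.updateRow i (Pi.single j 1)).permanent =
      (M.submatrix i.succAbove j.succAbove).permanent := by
  rw [← permanent_transpose, ← updateCol_transpose, permanent_updateCol_single,
    ← permanent_transpose, transpose_submatrix, transpose_transpose]

theorem permanent_updateRow_add_permanent_submatrix {n : ℕ}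
    (M : Matrix (Fin (n + 1)) (Fin (n + 1)) R) (i j₁ j₂ : Fin (n + 1)) (u : Fin (n + 1) → R)
    (h : M i + Pi.single j₁ 1 = u + Pi.single j₂ 1) :
    (M.updateRow i u).permanent + (M.submatrix i.succAbove j₂.succAbove).permanent =
      M.permanent + (M.submatrix i.succAbove j₁.succAbove).permanent := by
  have := congrArg (fun w => (M.updateRow i w).permanent) h
  simpa only [permanent_updateRow_add, permanent_updateRow_single, updateRow_eq_self]
    using this.symm

end Matrix

def blockRow (n d v : ℕ) : Fin n → ℕ :=
  fun j => if v ≤ (j : ℕ) + 1 ∧ (j : ℕ) + 1 ≤ v + d - 1 then 1 else 0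

theorem permanent_eq_matrix_permanent {n : ℕ} (A : Matrix (Fin n) (Fin n) ℕ) :
    permanent A = A.permanent :=
  Matrix.permanent_transpose A

theorem confMatrix_update (n d : ℕ) (x : Fin n → ℕ) (k : Fin n) (v : ℕ) :
    confMatrix n d (Function.update x k v) = (confMatrix n d x).updateRow k (blockRow n d v) := by
  ext a j
  rcases eq_or_ne a k with rfl | h
  · simp [confMatrix, blockRow]
  · simp [confMatrix, h]

theorem blockRow_add_single {n d v : ℕ} {c c' : Fin n} (hc : (c : ℕ) + 1 = v)
    (hc' : (c' : ℕ) + 1 = v + d) :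
    blockRow n d v + Pi.single c' 1 = blockRow n d (v + 1) + Pi.single c 1 := by
  ext j
  simp only [blockRow, Pi.add_apply, Pi.single_apply, Fin.ext_iff]
  split_ifs <;> omega

theorem permanent_confMatrix_update_add {m d : ℕ} (x : Fin (m + 1) → ℕ) (k c₁ c₂ : Fin (m + 1))
    (v : ℕ)
    (h : blockRow (m + 1) d (x k) + Pi.single c₁ 1 = blockRow (m + 1) d v + Pi.single c₂ 1) :
    permanent (confMatrix (m + 1) d (Function.update x k v)) +
        permanent (delMinor (confMatrix (m + 1) d x) k c₂) =
      permanent (confMatrix (m + 1) d x) + permanent (delMinor (confMatrix (m + 1) d x) k c₁) := by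
  simp only [permanent_eq_matrix_permanent, delMinor, confMatrix_update]
  exact Matrix.permanent_updateRow_add_permanent_submatrix _ k c₁ c₂ _ h

theorem per_push_expansion_general (d r m : ℕ)
    (x : Fin (m + 1) → ℕ)
    (i : Fin (m + 1)) :
    (x i ≤ r →
      ∀ c₁ c₂ : Fin (m + 1),
        (c₁ : ℕ) + 1 = x (istar x i) + d → (c₂ : ℕ) + 1 = x (istar x i) →
        (permanent (confMatrix (m + 1) d
            (Function.update x (istar x i) (x (istar x i) + 1))) : ℤ) =
          (permanent (confMatrix (m + 1) d x) : ℤ)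
            + (permanent (delMinor (confMatrix (m + 1) d x) (istar x i) c₁) : ℤ)
            - (permanent (delMinor (confMatrix (m + 1) d x) (istar x i) c₂) : ℤ)) ∧
    (2 ≤ x i →
      ∀ c₁ c₂ : Fin (m + 1),
        (c₁ : ℕ) + 1 = x (isubstar x i) - 1 → (c₂ : ℕ) + 1 = x (isubstar x i) + d - 1 →
        (permanent (confMatrix (m + 1) d
            (Function.update x (isubstar x i) (x (isubstar x i) - 1))) : ℤ) =
          (permanent (confMatrix (m + 1) d x) : ℤ)
            + (permanent (delMinor (confMatrix (m + 1) d x) (isubstar x i) c₁) : ℤ)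
            - (permanent (delMinor (confMatrix (m + 1) d x) (isubstar x i) c₂) : ℤ)) := by
  refine ⟨fun _ c₁ c₂ hc₁ hc₂ => ?_, fun _ c₁ c₂ hc₁ hc₂ => ?_⟩
  · have := permanent_confMatrix_update_add x (istar x i) c₁ c₂ _ (blockRow_add_single hc₂ hc₁)
    omega
  · set k := isubstar x i
    obtain ⟨v, hv⟩ : ∃ v, x k = v + 1 := ⟨x k - 1, by omega⟩
    have h_row : blockRow (m + 1) d (x k) + Pi.single c₁ 1 =
        blockRow (m + 1) d (x k - 1) + Pi.single c₂ 1 := by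
      rw [hv, Nat.add_sub_cancel]
      exact (blockRow_add_single (by omega) (by omega)).symm
    have := permanent_confMatrix_update_add x k c₁ c₂ _ h_row
    omega

/-- Expansion identities for the pushing operators.  For `A = (x₁,…,x_n) ∈ Γ_n^d`,
`n = d + r`, `0 < r < d`, with `x₁ ≤ … ≤ x_n`:
if `x i ≤ r` then `per_i^+(A) = per(A) + per(A_{i^*, x_{i^*}+d}) - per(A_{i^*, x_{i^*}})`,
and if `x i ≥ 2` then
`per_i^-(A) = per(A) + per(A_{i_*, x_{i_*}-1}) - per(A_{i_*, x_{i_*}+d-1})`.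
Columns are encoded by `c : Fin (m+1)` with 1-indexed value `(c : ℕ) + 1`. -/
theorem per_push_expansion (d r m : ℕ) (hr : 0 < r) (hrd : r < d)
    (hn : m + 1 = d + r)
    (x : Fin (m + 1) → ℕ) (hx : ValidConf (m + 1) d x) (hmono : Monotone x)
    (i : Fin (m + 1)) :
    (x i ≤ r →
      ∀ c₁ c₂ : Fin (m + 1),
        (c₁ : ℕ) + 1 = x (istar x i) + d → (c₂ : ℕ) + 1 = x (istar x i) →
        (permanent (confMatrix (m + 1) d
            (Function.update x (istar x i) (x (istar x i) + 1))) : ℤ) =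
          (permanent (confMatrix (m + 1) d x) : ℤ)
            + (permanent (delMinor (confMatrix (m + 1) d x) (istar x i) c₁) : ℤ)
            - (permanent (delMinor (confMatrix (m + 1) d x) (istar x i) c₂) : ℤ)) ∧
    (2 ≤ x i →
      ∀ c₁ c₂ : Fin (m + 1),
        (c₁ : ℕ) + 1 = x (isubstar x i) - 1 → (c₂ : ℕ) + 1 = x (isubstar x i) + d - 1 →
        (permanent (confMatrix (m + 1) d
            (Function.update x (isubstar x i) (x (isubstar x i) - 1))) : ℤ) =
          (permanent (confMatrix (m + 1) d x) : ℤ)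
            + (permanent (delMinor (confMatrix (m + 1) d x) (isubstar x i) c₁) : ℤ)
            - (permanent (delMinor (confMatrix (m + 1) d x) (isubstar x i) c₂) : ℤ)) :=
  per_push_expansion_general d r m x i
end

section
/- Let d, r be integers with 0 < r < d, set n = d + r, and let A = (x_1,…,x_n) ∈ Γ_n^d with x_1 ≤ x_2 ≤ … ≤ x_n. (1) If i is such that x_i < x_{i+1} ≤ r, let A' = (x_1,…,x_{i−1}, x_i+1, x_{i+1},…,x_n); if per(A) ≤ per(A') then per(A') ≤ per_i^+(A'). (2) Symmetrically, if i is such that 2 ≤ x_{i−1} < x_i, let A'' = (x_1,…,x_{i−1}, x_i−1, x_{i+1},…,x_n); if per(A) ≤ per(A'') then per(A'') ≤ per_i^−(A''). -/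
/-- `per_i^+`: the permanent of the configuration obtained by moving the non-zero block of
row `i^*` one step to the right. -/
def perPlus (n d : ℕ) (x : Fin n → ℕ) (i : Fin n) : ℕ :=
  permanent (confMatrix n d (Function.update x (istar x i) (x (istar x i) + 1)))

/-- `per_i^-`: the permanent of the configuration obtained by moving the non-zero block of
row `i_*` one step to the left. -/
def perMinus (n d : ℕ) (x : Fin n → ℕ) (i : Fin n) : ℕ :=
  permanent (confMatrix n d (Function.update x (isubstar x i) (x (isubstar x i) - 1)))

/-!
Fix a row `m` and let `M c` count the permutations that put row `m` in column `c` and every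
other row inside its block. Sliding the block of row `m` from `s` to `s + 1` changes the
permanent by `M (s + d) - M s`. When all blocks start in a column `≤ r + 1 ≤ d`, transposing two
adjacent columns shows that `M` decreases on the columns `1, …, r` and increases on the columns
`d + 1, …, d + r`, so the permanent is a convex function of the start `s ∈ [1, r + 1]` of one
block. By convexity, a step in either direction that does not decrease the permanent can be
repeated without decreasing it. Rows with the same start are interchangeable, so sliding row
`i^*` or `i_*` instead of row `i` does not change the permanent.
-/

open Finset Function Equiv

variable {n : ℕ}

/-- Columns are counted from `1`, as in `confMatrix`. -/
abbrev InBlock (d s c : ℕ) : Prop := s ≤ c ∧ c ≤ s + d - 1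

def fiber (d : ℕ) (y : Fin n → ℕ) (m : Fin n) (c : ℕ) : Finset (Perm (Fin n)) :=
  {σ | (σ m : ℕ) + 1 = c ∧ ∀ k ≠ m, InBlock d (y k) (σ k + 1)}

theorem permanent_confMatrix_eq_card (d : ℕ) (y : Fin n → ℕ) :
    permanent (confMatrix n d y) = #{σ : Perm (Fin n) | ∀ k, InBlock d (y k) (σ k + 1)} := by
  simp only [permanent, confMatrix, prod_boole, mem_univ, true_implies, sum_boole,
    Nat.cast_id]

theorem permanent_confMatrix_update_eq_sum (d : ℕ) (y : Fin n → ℕ) (m : Fin n) (s : ℕ) :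
    permanent (confMatrix n d (update y m s)) = ∑ c ∈ Ico s (s + d), #(fiber d y m c) := by
  rw [permanent_confMatrix_eq_card, card_eq_sum_card_fiberwise (f := fun σ => (σ m : ℕ) + 1)
    (t := Ico s (s + d))]
  · refine sum_congr rfl fun c hc => congrArg card ?_
    ext σ
    simp only [fiber, mem_filter, mem_univ, true_and, mem_Ico] at hc ⊢
    constructor
    · rintro ⟨hσ, rfl⟩
      exact ⟨rfl, fun k hk => by simpa [update_of_ne hk] using hσ k⟩
    · rintro ⟨rfl, hσ⟩
      refine ⟨fun k => ?_, rfl⟩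
      rcases eq_or_ne k m with rfl | hk
      · simp only [update_self]; omega
      · simpa [update_of_ne hk] using hσ k hk
  · intro σ hσ
    have := (mem_filter.1 hσ).2 m
    simp only [update_self] at this
    simp only [coe_Ico, Set.mem_Ico]
    omega

theorem permanent_confMatrix_update_add_card_fiber (d : ℕ) (y : Fin n → ℕ) (m : Fin n)
    (s : ℕ) :
    permanent (confMatrix n d (update y m s)) + #(fiber d y m (s + d)) =
      #(fiber d y m s) + permanent (confMatrix n d (update y m (s + 1))) := by
  rw [permanent_confMatrix_update_eq_sum, permanent_confMatrix_update_eq_sum,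
    ← sum_Ico_succ_top (by omega), add_right_comm]
  exact sum_eq_sum_Ico_succ_bot (by omega) _

theorem card_fiber_le_card_fiber {d : ℕ} {y : Fin n → ℕ} {m : Fin n} {a b : ℕ}
    (ha : 1 ≤ a) (han : a ≤ n) (hb : 1 ≤ b) (hbn : b ≤ n)
    (hab : ∀ k ≠ m, InBlock d (y k) a → InBlock d (y k) b) :
    #(fiber d y m b) ≤ #(fiber d y m a) := by
  set a' : Fin n := ⟨a - 1, by omega⟩
  set b' : Fin n := ⟨b - 1, by omega⟩
  refine card_le_card_of_injOn (swap a' b' * ·) (fun σ hσ => ?_) (mul_right_injective _).injOn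
  simp only [fiber, coe_filter, mem_univ, true_and, Set.mem_ofPred_eq] at hσ ⊢
  obtain ⟨hσm, hσ⟩ := hσ
  have hσm' : σ m = b' := Fin.ext (by simp [b']; omega)
  refine ⟨by simp [hσm', a']; omega, fun k hk => ?_⟩
  have hkb : σ k ≠ b' := hσm' ▸ σ.injective.ne hk
  rcases eq_or_ne (σ k) a' with hka | hka
  · have := hab k hk (by simpa [hka, a', Nat.sub_add_cancel ha] using hσ k hk)
    simpa [hka, b', Nat.sub_add_cancel hb] using this
  · simpa [swap_apply_of_ne_of_ne hka hkb] using hσ k hk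

theorem card_fiber_succ_le_card_fiber {d : ℕ} {y : Fin n → ℕ} {m : Fin n} {c : ℕ}
    (hc : 1 ≤ c) (hcd : c < d) (hcn : c < n) (hy : ∀ k ≠ m, 1 ≤ y k) :
    #(fiber d y m (c + 1)) ≤ #(fiber d y m c) :=
  card_fiber_le_card_fiber hc hcn.le (by omega) hcn fun k hk _ => by have := hy k hk; omega

theorem card_fiber_le_card_fiber_succ {d : ℕ} {y : Fin n → ℕ} {m : Fin n} {c : ℕ}
    (hc : 1 ≤ c) (hcn : c < n) (hy : ∀ k ≠ m, y k ≤ c) :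
    #(fiber d y m c) ≤ #(fiber d y m (c + 1)) :=
  card_fiber_le_card_fiber (by omega) hcn hc hcn.le fun k hk _ => by have := hy k hk; omega

theorem two_mul_permanent_confMatrix_update_le {d : ℕ} {y : Fin n → ℕ} {m : Fin n} {t : ℕ}
    (ht : 1 ≤ t) (htd : t < d) (htn : t + d < n) (hy : ∀ k ≠ m, 1 ≤ y k ∧ y k ≤ t + d) :
    2 * permanent (confMatrix n d (update y m (t + 1))) ≤
      permanent (confMatrix n d (update y m t)) +
        permanent (confMatrix n d (update y m (t + 2))) := by
  have slide₀ := permanent_confMatrix_update_add_card_fiber d y m t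
  have slide₁ := permanent_confMatrix_update_add_card_fiber d y m (t + 1)
  have hlow := card_fiber_succ_le_card_fiber ht htd (by omega) fun k hk => (hy k hk).1
  have hhigh := card_fiber_le_card_fiber_succ (d := d) (by omega) htn fun k hk => (hy k hk).2
  rw [show t + 1 + 1 = t + 2 from rfl, add_right_comm t 1 d] at slide₁
  omega

theorem permanent_confMatrix_comp_perm (d : ℕ) (y : Fin n → ℕ) (e : Perm (Fin n)) :
    permanent (confMatrix n d (y ∘ e)) = permanent (confMatrix n d y) := by
  have h (A : Matrix (Fin n) (Fin n) ℕ) : permanent A = A.permanent :=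
    Matrix.permanent_transpose A
  rw [h, h]
  exact Matrix.permanent_permute_cols e (confMatrix n d y)

theorem update_update_eq_comp_swap {ι α : Type*} [DecidableEq ι] (x : ι → α) {i m : ι} {v : α}
    (hm : update x i v m = v) (u : α) :
    update (update x i v) m u = update x i u ∘ swap i m := by
  ext k
  rcases eq_or_ne k m with rfl | hkm
  · simp
  rcases eq_or_ne k i with rfl | hki
  · simp only [update_of_ne hkm, update_self, comp_apply, swap_apply_left,
      update_of_ne hkm.symm] at hm ⊢
    exact hm.symm
  · simp [update_of_ne hkm, update_of_ne hki, swap_apply_of_ne_of_ne hki hkm]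

theorem permanent_confMatrix_update_update {d : ℕ} (x : Fin n → ℕ) {i m : Fin n} {v : ℕ}
    (hm : update x i v m = v) (u : ℕ) :
    permanent (confMatrix n d (update (update x i v) m u)) =
      permanent (confMatrix n d (update x i u)) := by
  rw [update_update_eq_comp_swap x hm, permanent_confMatrix_comp_perm]

theorem apply_istar (x : Fin n → ℕ) (i : Fin n) : x (istar x i) = x i := by
  simpa [istar] using max'_mem {k | x k = x i} _

theorem apply_isubstar (x : Fin n → ℕ) (i : Fin n) : x (isubstar x i) = x i := by
  simpa [isubstar] using min'_mem {k | x k = x i} _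

theorem perPlus_update (d : ℕ) (x : Fin n → ℕ) (i : Fin n) (v : ℕ) :
    perPlus n d (update x i v) i = permanent (confMatrix n d (update x i (v + 1))) := by
  have hm : update x i v (istar (update x i v) i) = v :=
    (apply_istar _ i).trans (update_self i v x)
  rw [perPlus, hm, permanent_confMatrix_update_update x hm]

theorem perMinus_update (d : ℕ) (x : Fin n → ℕ) (i : Fin n) (v : ℕ) :
    perMinus n d (update x i v) i = permanent (confMatrix n d (update x i (v - 1))) := by
  have hm : update x i v (isubstar (update x i v) i) = v :=
    (apply_isubstar _ i).trans (update_self i v x)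
  rw [perMinus, hm, permanent_confMatrix_update_update x hm]

theorem push_all_the_way_general (d r : ℕ) (hrd : r < d)
    (x : Fin (d + r) → ℕ) (hx : ValidConf (d + r) d x) :
    (∀ i j : Fin (d + r), (j : ℕ) = (i : ℕ) + 1 → x i < x j → x j ≤ r →
      permanent (confMatrix (d + r) d x) ≤
        permanent (confMatrix (d + r) d (Function.update x i (x i + 1))) →
      permanent (confMatrix (d + r) d (Function.update x i (x i + 1))) ≤
        perPlus (d + r) d (Function.update x i (x i + 1)) i) ∧
    (∀ i j : Fin (d + r), (i : ℕ) = (j : ℕ) + 1 → 2 ≤ x j → x j < x i →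
      permanent (confMatrix (d + r) d x) ≤
        permanent (confMatrix (d + r) d (Function.update x i (x i - 1))) →
      permanent (confMatrix (d + r) d (Function.update x i (x i - 1))) ≤
        perMinus (d + r) d (Function.update x i (x i - 1)) i) := by
  have hxr (k : Fin (d + r)) : 1 ≤ x k ∧ x k ≤ r + 1 := by have := hx k; omega
  constructor
  · intro i j _ hij hjr hA
    have hconv := two_mul_permanent_confMatrix_update_le (d := d) (y := x) (m := i) (t := x i)
      (hxr i).1 (by omega) (by omega) fun k _ => by have := hxr k; omega
    rw [update_eq_self] at hconv
    rw [perPlus_update, show x i + 1 + 1 = x i + 2 from rfl]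
    omega
  · intro i j _ hj hji hA
    have hconv := two_mul_permanent_confMatrix_update_le (d := d) (y := x) (m := i) (t := x i - 2)
      (by omega) (by have := hxr i; omega) (by have := hxr i; omega)
      fun k _ => by have := hxr k; omega
    rw [show x i - 2 + 2 = x i by omega, update_eq_self, show x i - 2 + 1 = x i - 1 by omega]
      at hconv
    rw [perMinus_update, show x i - 1 - 1 = x i - 2 by omega]
    omega

/-- Pushing all the way.  Let `A = (x₁,…,x_n) ∈ Γ_n^d`, `n = d + r`, `0 < r < d`,
with `x₁ ≤ … ≤ x_n`.
(1) If `x i < x_{i+1} ≤ r` (here `j` is the index with `(j:ℕ) = (i:ℕ)+1`), let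
`A' = (x₁,…,x_{i-1}, x_i+1, x_{i+1},…,x_n)`; if `per(A) ≤ per(A')` then
`per(A') ≤ per_i^+(A')`.
(2) Symmetrically, if `2 ≤ x_{i-1} < x i` (here `j` is the index with `(i:ℕ) = (j:ℕ)+1`),
let `A'' = (x₁,…,x_{i-1}, x_i-1, x_{i+1},…,x_n)`; if `per(A) ≤ per(A'')` then
`per(A'') ≤ per_i^-(A'')`. -/
theorem push_all_the_way (d r : ℕ) (hr : 0 < r) (hrd : r < d)
    (x : Fin (d + r) → ℕ) (hx : ValidConf (d + r) d x) (hmono : Monotone x) :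
    (∀ i j : Fin (d + r), (j : ℕ) = (i : ℕ) + 1 → x i < x j → x j ≤ r →
      permanent (confMatrix (d + r) d x) ≤
        permanent (confMatrix (d + r) d (Function.update x i (x i + 1))) →
      permanent (confMatrix (d + r) d (Function.update x i (x i + 1))) ≤
        perPlus (d + r) d (Function.update x i (x i + 1)) i) ∧
    (∀ i j : Fin (d + r), (i : ℕ) = (j : ℕ) + 1 → 2 ≤ x j → x j < x i →
      permanent (confMatrix (d + r) d x) ≤
        permanent (confMatrix (d + r) d (Function.update x i (x i - 1))) →
      permanent (confMatrix (d + r) d (Function.update x i (x i - 1))) ≤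
        perMinus (d + r) d (Function.update x i (x i - 1)) i) :=
  push_all_the_way_general d r hrd x hx
end

section
/- Let d, r be integers with 0 < r ≤ d and set n = d + r. The matrix A = (x_1,…,x_n) ∈ Γ_n^d defined by x_i = 1 for 1 ≤ i ≤ ⌊(d+r)/2⌋ and x_i = r+1 otherwise satisfies per(A) = C(d−r, ⌊(d−r)/2⌋) · (⌊(d+r)/2⌋)! · (⌈(d+r)/2⌉)!, where C(·,·) denotes the binomial coefficient; in particular A attains the maximum permanent over Γ_n^d, i.e., A ∈ M_n^d. -/
/-- The configuration with `x_i = 1` for `1 ≤ i ≤ ⌊(d+r)/2⌋` and `x_i = r + 1` otherwise. -/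
def optConf (d r : ℕ) : Fin (d + r) → ℕ :=
  fun i => if (i : ℕ) + 1 ≤ (d + r) / 2 then 1 else r + 1

/-!
The permanent of `confMatrix x` counts the permutations sending every row into its block of
columns. As a function of a single start `x i`, the others fixed, this count is discretely convex
on `[1, r + 1]` (a swap argument), so the maximum is attained by configurations using only the
extreme starts `1` and `r + 1`. If `t` rows start at `1`, an admissible permutation sends them into
the first `d` columns and the others into the last `d` columns; counting by the image of these `t`
rows gives `(d - r)! * t.descFactorial r * (n - t).descFactorial r`, and each factor
`(t - k) * (n - t - k)` of the last two is largest at `t = n / 2`.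
-/

open Finset Equiv Function
open scoped Nat

section

variable {α : Type*} [Fintype α] [DecidableEq α]

def permsWithin (p : α → α → Prop) [DecidableRel p] : Finset (Perm α) :=
  {σ | ∀ i, p i (σ i)}

variable {p q : α → α → Prop} [DecidableRel p] [DecidableRel q] {i b c : α}

@[simp] lemma mem_permsWithin {σ : Perm α} : σ ∈ permsWithin p ↔ ∀ i, p i (σ i) := by
  simp [permsWithin]

lemma card_filter_apply_eq_le_of_swap (hpq : ∀ j ≠ i, ∀ k, p j k → q j k) (hqi : q i c)
    (hcb : ∀ j ≠ i, p j c → p j b) :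
    #{σ ∈ permsWithin p | σ i = b} ≤ #{σ ∈ permsWithin q | σ i = c} := by
  have hinv : ∀ σ : Perm α, σ i = b →
      (σ * swap i (σ.symm c)) * swap i ((σ * swap i (σ.symm c)).symm b) = σ := by
    intro σ hσ
    have : (σ * swap i (σ.symm c)).symm b = σ.symm c := by
      simp [Perm.mul_def, ← hσ, swap_apply_left]
    rw [this, mul_assoc, swap_mul_self, mul_one]
  refine card_le_card_of_injOn (fun σ => σ * swap i (σ.symm c)) ?_ ?_
  · intro σ hσ
    simp only [coe_filter, mem_permsWithin, Set.mem_ofPred_eq] at hσ ⊢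
    refine ⟨fun j => ?_, by simp⟩
    rcases eq_or_ne j i with rfl | hji
    · simpa using hqi
    rcases eq_or_ne j (σ.symm c) with rfl | hjc
    · have := hσ.1 (σ.symm c)
      rw [apply_symm_apply] at this
      simpa [hσ.2] using hpq _ hji _ (hcb _ hji this)
    · simpa [Perm.mul_apply, swap_apply_of_ne_of_ne hji hjc] using hpq j hji _ (hσ.1 j)
  · intro σ₁ h₁ σ₂ h₂ h
    simp only [coe_filter, mem_permsWithin, Set.mem_ofPred_eq] at h₁ h₂
    rw [← hinv σ₁ h₁.2, ← hinv σ₂ h₂.2]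
    simp only at h
    rw [h]

lemma card_filter_apply_ne_le (hpq : ∀ j ≠ i, ∀ k, p j k → q j k)
    (hi : ∀ k, p i k → k ≠ b → q i k ∧ k ≠ c) :
    #{σ ∈ permsWithin p | σ i ≠ b} ≤ #{σ ∈ permsWithin q | σ i ≠ c} := by
  refine card_le_card fun σ hσ => ?_
  simp only [mem_filter, mem_permsWithin] at hσ ⊢
  have hσi := hi _ (hσ.1 i) hσ.2
  refine ⟨fun j => ?_, hσi.2⟩
  rcases eq_or_ne j i with rfl | hji
  exacts [hσi.1, hpq j hji _ (hσ.1 j)]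

lemma forall_mem_ite_iff (A C D : Finset α) (σ : Perm α) :
    (∀ i, σ i ∈ if i ∈ A then C else D) ↔
      Dᶜ ⊆ A.map σ.toEmbedding ∧ A.map σ.toEmbedding ⊆ C := by
  simp only [subset_iff, mem_compl, mem_map_equiv]
  constructor
  · intro h
    refine ⟨fun y hy => ?_, fun y hy => by simpa [hy] using h (σ.symm y)⟩
    by_contra hA
    simpa [hA, hy] using h (σ.symm y)
  · rintro ⟨hD, hC⟩ i
    split_ifs with hi
    · exact hC (by simpa using hi)
    · by_contra hy
      exact hi (by simpa using hD hy)

lemma card_perm_map_eq (A S : Finset α) (h : #S = #A) :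
    #{σ : Perm α | A.map σ.toEmbedding = S} = (#A)! * (Fintype.card α - #A)! := by
  let e : {x // x ∈ A} ≃ {x // x ∈ S} := Fintype.equivOfCardEq (by simp [h])
  have hτ : ∀ x, e.extendSubtype x ∈ S ↔ x ∈ A := fun x => by
    by_cases hx : x ∈ A
    · simpa [hx] using e.extendSubtype_mem x hx
    · simpa [hx] using e.extendSubtype_not_mem x hx
  have hmap : ∀ σ : Perm α, A.map σ.toEmbedding = S ↔ ∀ x, σ x ∈ S ↔ x ∈ A := by
    intro σ
    rw [Finset.ext_iff, ← σ.forall_congr_right]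
    simp [iff_comm]
  -- the permutations mapping `A` onto `S` form a coset of the stabiliser of `A`
  have hcoset : #{σ : Perm α | A.map σ.toEmbedding = S} =
      #{g : Perm α | ∀ x, g x ∈ A ↔ x ∈ A} := by
    simp only [hmap]
    exact card_nbij' (e.extendSubtype⁻¹ * ·) (e.extendSubtype * ·)
      (fun σ hσ => by simp_all [← hτ]) (fun g hg => by simp_all)
      (fun σ _ => by simp) (fun g _ => by simp)
  have hstab : #{g : Perm α | ∀ x, g x ∈ A ↔ x ∈ A} =
      Fintype.card {g : Perm α // (fun x => decide (x ∈ A)) ∘ g = fun x => decide (x ∈ A)} := by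
    rw [Fintype.card_subtype]
    congr! 3 with g
    simp [funext_iff]
  rw [hcoset, hstab, DomMulAct.stabilizer_card, Fintype.prod_bool]
  simp [Fintype.card_subtype, filter_not, card_sdiff]

lemma card_permsWithin_ite (A C D : Finset α) :
    #(permsWithin fun i j => j ∈ if i ∈ A then C else D) =
      #{S ∈ Icc Dᶜ C | #S = #A} * (#A)! * (Fintype.card α - #A)! := by
  rw [card_eq_sum_card_fiberwise (f := fun σ : Perm α => A.map σ.toEmbedding)
    (t := {S ∈ Icc Dᶜ C | #S = #A}) (fun σ hσ => by simpa [forall_mem_ite_iff] using hσ),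
    mul_assoc, ← smul_eq_mul, ← sum_const]
  refine sum_congr rfl fun S hS => ?_
  simp only [mem_filter, mem_Icc] at hS
  rw [← card_perm_map_eq A S hS.2]
  congr 1
  ext σ
  simp only [mem_filter, mem_permsWithin, mem_univ, true_and, and_iff_right_iff_imp]
  rintro rfl
  exact (forall_mem_ite_iff A C D σ).2 hS.1

end

lemma card_filter_Icc_card_eq {α : Type*} [DecidableEq α] {L C : Finset α} (hLC : L ⊆ C)
    {t : ℕ} (ht : #L ≤ t) :
    #{S ∈ Icc L C | #S = t} = (#C - #L).choose (t - #L) := by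
  rw [← card_sdiff_of_subset hLC, ← card_powersetCard]
  refine card_nbij' (· \ L) (L ∪ ·) ?_ ?_ ?_ ?_
  · intro S hS
    simp only [coe_filter, mem_Icc, Set.mem_ofPred_eq, mem_coe, mem_powersetCard] at hS ⊢
    refine ⟨sdiff_subset_sdiff hS.1.2 le_rfl, ?_⟩
    rw [card_sdiff_of_subset hS.1.1, hS.2]
  · intro T hT
    simp only [coe_filter, mem_Icc, Set.mem_ofPred_eq, mem_coe, mem_powersetCard,
      subset_sdiff] at hT ⊢
    refine ⟨⟨subset_union_left, union_subset hLC hT.1.1⟩, ?_⟩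
    rw [card_union_of_disjoint hT.1.2.symm]
    omega
  · intro S hS
    simp only [coe_filter, mem_Icc, Set.mem_ofPred_eq] at hS
    exact union_sdiff_of_subset hS.1.1
  · intro T hT
    simp only [mem_coe, mem_powersetCard, subset_sdiff] at hT
    exact union_sdiff_cancel_left hT.1.2.symm

lemma le_max_of_two_mul_le_add {g : ℕ → ℕ} {a b : ℕ}
    (hg : ∀ v, a < v → v < b → 2 * g v ≤ g (v - 1) + g (v + 1)) {v : ℕ} (hav : a ≤ v)
    (hvb : v ≤ b) : g v ≤ max (g a) (g b) := by
  classical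
  have hex : ∃ u, a ≤ u ∧ u ≤ b ∧ ∀ w, a ≤ w → w ≤ b → g w ≤ g u := by
    obtain ⟨u, hu, hmax⟩ := (Icc a b).exists_max_image g ⟨v, mem_Icc.2 ⟨hav, hvb⟩⟩
    exact ⟨u, (mem_Icc.1 hu).1, (mem_Icc.1 hu).2, fun w h₁ h₂ => hmax w (mem_Icc.2 ⟨h₁, h₂⟩)⟩
  obtain ⟨hau, hub, hmax⟩ := Nat.find_spec hex
  have hv := hmax v hav hvb
  rcases hau.eq_or_lt with hau | hau
  · rw [hau]; exact hv.trans (le_max_left _ _)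
  rcases hub.eq_or_lt with hub | hub
  · rw [← hub]; exact hv.trans (le_max_right _ _)
  -- the least maximiser is interior, where strict growth from the left contradicts convexity
  have hleft : g (Nat.find hex - 1) < g (Nat.find hex) := by
    have := Nat.find_min hex (m := Nat.find hex - 1) (by omega)
    push Not at this
    obtain ⟨w, haw, hwb, hw⟩ := this (by omega) (by omega)
    exact hw.trans_le (hmax w haw hwb)
  have := hg _ hau hub
  have := hmax (Nat.find hex + 1) (by omega) (by omega)
  omega

lemma mul_sub_le_half_mul_sub_half (n t k : ℕ) :
    (t - k) * (n - t - k) ≤ (n / 2 - k) * (n - n / 2 - k) := by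
  by_cases h0 : t - k = 0 ∨ n - t - k = 0
  · rcases h0 with h0 | h0 <;> simp [h0]
  obtain ⟨q, e, rfl, he⟩ : ∃ q e, n = 2 * q + e ∧ e ≤ 1 := ⟨n / 2, n % 2, by omega, by omega⟩
  rw [show (2 * q + e) / 2 = q by omega]
  zify [(by omega : k ≤ t), (by omega : k ≤ q), (by omega : t ≤ 2 * q + e),
    (by omega : q ≤ 2 * q + e), (by omega : k ≤ 2 * q + e - q), (by omega : k ≤ 2 * q + e - t)]
  -- the difference of the two sides is `(q - t) * (q + e - t)`
  rcases le_or_gt t q with h | h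
  · have : (0 : ℤ) ≤ (q - t) * (q + e - t) := mul_nonneg (by omega) (by omega)
    nlinarith
  · have : (0 : ℤ) ≤ (t - q) * (t - q - e) := mul_nonneg (by omega) (by omega)
    nlinarith

lemma descFactorial_mul_descFactorial_sub_le (n t r : ℕ) :
    t.descFactorial r * (n - t).descFactorial r ≤
      (n / 2).descFactorial r * (n - n / 2).descFactorial r := by
  simp only [Nat.descFactorial_eq_prod_range, ← prod_mul_distrib]
  exact prod_le_prod' fun k _ => mul_sub_le_half_mul_sub_half n t k

lemma choose_mul_factorial_mul_factorial_eq_descFactorial {d r t : ℕ} (hrd : r ≤ d)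
    (hrt : r ≤ t) (htn : t ≤ d + r) :
    (d - r).choose (t - r) * t ! * (d + r - t)! =
      (d - r)! * t.descFactorial r * (d + r - t).descFactorial r := by
  rcases le_or_gt t d with htd | htd
  · rw [← Nat.factorial_mul_descFactorial hrt,
      ← Nat.factorial_mul_descFactorial (by omega : r ≤ d + r - t),
      ← Nat.choose_mul_factorial_mul_factorial (by omega : t - r ≤ d - r),
      show d + r - t - r = d - r - (t - r) by omega]
    ring
  · rw [Nat.choose_eq_zero_of_lt (by omega),
      Nat.descFactorial_eq_zero_iff_lt.2 (show d + r - t < r by omega)]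
    simp

lemma permanent_ite_eq_card_permsWithin {n : ℕ} (p : Fin n → Fin n → Prop) [DecidableRel p] :
    permanent (fun i j => if p i j then 1 else 0 : Matrix (Fin n) (Fin n) ℕ) =
      #(permsWithin p) := by
  simp only [permanent, prod_boole, mem_univ, true_implies, permsWithin, card_filter]
  congr!

def blockPerms {n : ℕ} (d : ℕ) (x : Fin n → ℕ) : Finset (Perm (Fin n)) :=
  permsWithin fun i j => x i ≤ (j : ℕ) + 1 ∧ (j : ℕ) + 1 ≤ x i + d - 1

lemma permanent_confMatrix {n : ℕ} (d : ℕ) (x : Fin n → ℕ) :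
    permanent (confMatrix n d x) = #(blockPerms d x) :=
  permanent_ite_eq_card_permsWithin _

lemma two_mul_card_blockPerms_update_le {d r : ℕ} (hrd : r ≤ d) {x : Fin (d + r) → ℕ}
    (hx : ∀ j, 1 ≤ x j ∧ x j ≤ r + 1) (i : Fin (d + r)) {v : ℕ} (hv : 2 ≤ v) (hvr : v ≤ r) :
    2 * #(blockPerms d (update x i v)) ≤
      #(blockPerms d (update x i (v - 1))) + #(blockPerms d (update x i (v + 1))) := by
  have hoff : ∀ w w', ∀ j ≠ i, ∀ k : Fin (d + r),
      update x i w j ≤ k + 1 ∧ k + 1 ≤ update x i w j + d - 1 →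
        update x i w' j ≤ k + 1 ∧ k + 1 ≤ update x i w' j + d - 1 := by
    intro w w' j hj k
    simp only [update_of_ne hj, imp_self]
  let bm : Fin (d + r) := ⟨v - 1, by omega⟩
  let cm : Fin (d + r) := ⟨v - 2, by omega⟩
  let bp : Fin (d + r) := ⟨v + d - 2, by omega⟩
  let cp : Fin (d + r) := ⟨v + d - 1, by omega⟩
  -- A permutation admissible for `v` either avoids the first column `bm` of row `i`, and is then
  -- admissible for `v + 1`, or uses it, and a swap makes it use `cm` instead, admissible for
  -- `v - 1`; symmetrically for the last column `bp`. Adding the two splittings gives the claim.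
  have hsplit : ∀ w c, #{σ ∈ blockPerms d (update x i w) | σ i = c} +
      #{σ ∈ blockPerms d (update x i w) | σ i ≠ c} = #(blockPerms d (update x i w)) :=
    fun _ _ => card_filter_add_card_filter_not _
  have := hsplit v bm
  have := hsplit v bp
  have := hsplit (v - 1) cm
  have := hsplit (v + 1) cp
  unfold blockPerms at *
  have hm_eq := card_filter_apply_eq_le_of_swap (i := i) (b := bm) (c := cm)
    (hoff v (v - 1)) (by simp only [update_self, cm]; omega)
    (fun j hj => by simp only [update_of_ne hj, bm, cm]; have := hx j; omega)
  have hp_eq := card_filter_apply_eq_le_of_swap (i := i) (b := bp) (c := cp)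
    (hoff v (v + 1)) (by simp only [update_self, cp]; omega)
    (fun j hj => by simp only [update_of_ne hj, bp, cp]; have := hx j; omega)
  have hm_ne := card_filter_apply_ne_le (i := i) (b := bm) (c := cp) (hoff v (v + 1))
    (fun k => by simp only [update_self, ne_eq, Fin.ext_iff, bm, cp]; omega)
  have hp_ne := card_filter_apply_ne_le (i := i) (b := bp) (c := cm) (hoff v (v - 1))
    (fun k => by simp only [update_self, ne_eq, Fin.ext_iff, bp, cm]; omega)
  omega

def twoConf {n : ℕ} (r : ℕ) (A : Finset (Fin n)) : Fin n → ℕ :=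
  fun i => if i ∈ A then 1 else r + 1

lemma card_blockPerms_le_of_forall_twoConf {d r M : ℕ} (hrd : r ≤ d)
    (hM : ∀ A : Finset (Fin (d + r)), #(blockPerms d (twoConf r A)) ≤ M) {x : Fin (d + r) → ℕ}
    (hx : ∀ j, 1 ≤ x j ∧ x j ≤ r + 1) : #(blockPerms d x) ≤ M := by
  suffices h : ∀ s : Finset (Fin (d + r)), ∀ x : Fin (d + r) → ℕ,
      (∀ j, 1 ≤ x j ∧ x j ≤ r + 1) → (∀ j ∉ s, x j = 1 ∨ x j = r + 1) → #(blockPerms d x) ≤ M from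
    h univ x hx (by simp)
  intro s
  induction s using Finset.induction_on with
  | empty =>
    intro x _ hx₂
    convert hM {j | x j = 1}
    funext j
    rcases hx₂ j (notMem_empty j) with h | h <;> simp [twoConf, h]
  | insert i s _ ih =>
    intro x hx hx₂
    have hend : ∀ w, w = 1 ∨ w = r + 1 → #(blockPerms d (update x i w)) ≤ M := by
      intro w hw
      refine ih _ (fun j => ?_) (fun j hj => ?_)
      · rcases eq_or_ne j i with rfl | hji
        · simp only [update_self]; omega
        · simpa [update_of_ne hji] using hx j
      · rcases eq_or_ne j i with rfl | hji
        · simpa using hw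
        · simpa [update_of_ne hji] using hx₂ j (by simp [hji, hj])
    calc #(blockPerms d x) = #(blockPerms d (update x i (x i))) := by rw [update_eq_self]
      _ ≤ max (#(blockPerms d (update x i 1))) (#(blockPerms d (update x i (r + 1)))) :=
        le_max_of_two_mul_le_add (g := fun w => #(blockPerms d (update x i w)))
          (fun v h₁ h₂ => two_mul_card_blockPerms_update_le hrd hx i (by omega) (by omega))
          (hx i).1 (hx i).2
      _ ≤ M := max_le (hend 1 (.inl rfl)) (hend _ (.inr rfl))

lemma card_blockPerms_twoConf {d r : ℕ} (hrd : r ≤ d) (A : Finset (Fin (d + r))) :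
    #(blockPerms d (twoConf r A)) =
      (d - r)! * (#A).descFactorial r * (d + r - #A).descFactorial r := by
  set C : Finset (Fin (d + r)) := {j | (j : ℕ) < d}
  set D : Finset (Fin (d + r)) := {j | r ≤ (j : ℕ)}
  have hC : #C = d := by simp [C, Fin.card_filter_val_lt]
  have hD : #Dᶜ = r := by simp [D, compl_filter, Fin.card_filter_val_lt]
  have hDC : Dᶜ ⊆ C := fun j => by
    simp only [compl_filter, not_le, mem_filter, mem_univ, true_and, C, D]
    omega
  have hblock :
      blockPerms d (twoConf r A) = permsWithin fun i j => j ∈ if i ∈ A then C else D := by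
    ext σ
    simp only [blockPerms, mem_permsWithin]
    refine forall_congr' fun i => ?_
    have := (σ i).isLt
    by_cases hi : i ∈ A <;>
      simp only [twoConf, hi, if_true, if_false, C, D, mem_filter, mem_univ, true_and] <;> omega
  rw [hblock, card_permsWithin_ite, Fintype.card_fin]
  rcases lt_or_ge #A r with h | h
  · rw [Nat.descFactorial_eq_zero_iff_lt.2 h, card_eq_zero.2]
    · simp
    refine filter_eq_empty_iff.2 fun S hS hSA => ?_
    have := card_le_card (mem_Icc.1 hS).1
    omega
  · rw [card_filter_Icc_card_eq hDC (hD.symm ▸ h), hC, hD,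
      choose_mul_factorial_mul_factorial_eq_descFactorial hrd h
        (card_le_univ A |>.trans_eq (by simp))]

lemma optConf_eq_twoConf (d r : ℕ) : optConf d r = twoConf r {i | (i : ℕ) < (d + r) / 2} := by
  funext i
  simp only [optConf, twoConf, mem_filter, mem_univ, true_and]
  congr 1

theorem opt_conf_attains_max_general (d r : ℕ) (hrd : r ≤ d) :
    IsGamma (d + r) d (confMatrix (d + r) d (optConf d r)) ∧
    permanent (confMatrix (d + r) d (optConf d r)) =
      Nat.choose (d - r) ((d - r) / 2) * ((d + r) / 2).factorial *
        ((d + r + 1) / 2).factorial ∧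
    ∀ B : Matrix (Fin (d + r)) (Fin (d + r)) ℕ, IsGamma (d + r) d B →
      permanent B ≤ permanent (confMatrix (d + r) d (optConf d r)) := by
  have hopt : #(blockPerms d (optConf d r)) =
      (d - r)! * ((d + r) / 2).descFactorial r * (d + r - (d + r) / 2).descFactorial r := by
    rw [optConf_eq_twoConf, card_blockPerms_twoConf hrd, Fin.card_filter_val_lt,
      min_eq_right (Nat.div_le_self _ _)]
  refine ⟨⟨optConf d r, fun i => ?_, rfl⟩, ?_, ?_⟩
  · simp only [optConf]
    split_ifs <;> omega
  · rw [permanent_confMatrix, hopt,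
      ← choose_mul_factorial_mul_factorial_eq_descFactorial hrd (by omega) (by omega),
      show (d + r) / 2 - r = (d - r) / 2 by omega,
      show d + r - (d + r) / 2 = (d + r + 1) / 2 by omega]
  · rintro B ⟨x, hx, rfl⟩
    rw [permanent_confMatrix, permanent_confMatrix, hopt]
    refine card_blockPerms_le_of_forall_twoConf hrd (fun A => ?_)
      fun j => ⟨(hx j).1, by have := (hx j).2; omega⟩
    rw [card_blockPerms_twoConf hrd, mul_assoc, mul_assoc]
    exact Nat.mul_le_mul_left _ (descFactorial_mul_descFactorial_sub_le _ _ _)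

/-- For `n = d + r` with `0 < r ≤ d`, the matrix `A ∈ Γ_n^d` whose configuration has
`x_i = 1` for `1 ≤ i ≤ ⌊(d+r)/2⌋` and `x_i = r+1` otherwise satisfies
`per(A) = C(d-r, ⌊(d-r)/2⌋) · ⌊(d+r)/2⌋! · ⌈(d+r)/2⌉!`, and `A ∈ M_n^d`, i.e. `A`
attains the maximum permanent over `Γ_n^d`. -/
theorem opt_conf_attains_max (d r : ℕ) (hr : 0 < r) (hrd : r ≤ d) :
    IsGamma (d + r) d (confMatrix (d + r) d (optConf d r)) ∧
    permanent (confMatrix (d + r) d (optConf d r)) =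
      Nat.choose (d - r) ((d - r) / 2) * ((d + r) / 2).factorial *
        ((d + r + 1) / 2).factorial ∧
    ∀ B : Matrix (Fin (d + r)) (Fin (d + r)) ℕ, IsGamma (d + r) d B →
      permanent B ≤ permanent (confMatrix (d + r) d (optConf d r)) :=
  opt_conf_attains_max_general d r hrd
end
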